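/- Let n ≥ 3 and let λ be a Jordan multiplication on ℂⁿ admitting a nonzero idempotent, i.e., some e ∈ ℂⁿ with e ≠ 0 and λ e e = e. Then there exist scalars ζ₂, …, ζₙ, each equal to 0, 1/2, or 1, such that the multiplication J(ζ) on ℂⁿ defined by e₁e₁ = e₁ and e₁eᵢ = eᵢe₁ = ζᵢeᵢ for 2 ≤ i ≤ n lies in closure(Orb(λ)). -/

import Mathlib

noncomputable section

abbrev V (n : ℕ) : Type := Fin n → ℂ

abbrev Bil (n : ℕ) : Type := V n →ₗ[ℂ] V n →ₗ[ℂ] V n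

instance BilTop (n : ℕ) : TopologicalSpace (Bil n) :=
  TopologicalSpace.induced (fun μ : Bil n => fun x y : V n => μ x y) inferInstance

/-- The change-of-basis action of a linear automorphism on multiplications. -/
def act {n : ℕ} (g : V n ≃ₗ[ℂ] V n) (μ : Bil n) : Bil n :=
  LinearMap.mk₂ ℂ (fun x y => g (μ (g.symm x) (g.symm y)))
    (fun x x' y => by simp)
    (fun c x y => by simp)
    (fun x y y' => by simp)
    (fun c x y => by simp)

/-- The orbit of a multiplication under the change-of-basis action. -/
def orb {n : ℕ} (μ : Bil n) : Set (Bil n) :=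
  Set.range fun g : V n ≃ₗ[ℂ] V n => act g μ

/-- Two multiplications are isomorphic iff they lie in the same orbit. -/
def Isom {n : ℕ} (μ ν : Bil n) : Prop := ∃ g : V n ≃ₗ[ℂ] V n, act g μ = ν

def levelOne {n : ℕ} (lam : Bil n) : Prop :=
  lam ≠ 0 ∧ closure (orb lam) ⊆ orb lam ∪ {0}

def levelTwo {n : ℕ} (lam : Bil n) : Prop :=
  (∀ μ ∈ closure (orb lam) \ orb lam, closure (orb μ) ⊆ orb μ ∪ {0}) ∧
  ∃ μ ∈ closure (orb lam) \ orb lam, μ ≠ 0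

/-- `E n k` is the standard basis vector `e_{k+1}` of `ℂⁿ` (0-indexed `k`). -/
def E (n k : ℕ) : V n := fun m => if (m : ℕ) = k then 1 else 0

/-- The bilinear multiplication determined by a table of products of basis vectors. -/
def ofTable {n : ℕ} (c : Fin n → Fin n → V n) : Bil n :=
  LinearMap.mk₂ ℂ (fun x y => ∑ i : Fin n, ∑ j : Fin n, (x i * y j) • c i j)
    (fun x x' y => by
      simp [add_mul, add_smul, Finset.sum_add_distrib])
    (fun a x y => by
      simp [Finset.smul_sum, smul_smul, mul_assoc])
    (fun x y y' => by
      simp [mul_add, add_smul, Finset.sum_add_distrib])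
    (fun a x y => by
      simp [Finset.smul_sum, smul_smul, mul_assoc, mul_left_comm])

def JordanMul {n : ℕ} (lam : Bil n) : Prop :=
  (∀ x y : V n, lam x y = lam y x) ∧
  ∀ x y : V n, lam (lam x x) (lam y x) = lam (lam (lam x x) y) x

def LieMul {n : ℕ} (lam : Bil n) : Prop :=
  (∀ x : V n, lam x x = 0) ∧
  ∀ x y z : V n, lam x (lam y z) + lam y (lam z x) + lam z (lam x y) = 0

def AssocMul {n : ℕ} (lam : Bil n) : Prop :=
  ∀ x y z : V n, lam (lam x y) z = lam x (lam y z)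
/-- `J(ζ)`: `e₁e₁ = e₁`, `e₁eᵢ = eᵢe₁ = ζᵢ eᵢ` for `2 ≤ i ≤ n`. -/
def Jzeta (n : ℕ) (ζ : Fin n → ℂ) : Bil n :=
  ofTable fun i j =>
    if i.val = 0 ∧ j.val = 0 then E n 0
    else if i.val = 0 ∧ 1 ≤ j.val then ζ j • E n j.val
    else if j.val = 0 ∧ 1 ≤ i.val then ζ i • E n i.val
    else 0

/-!
If `e` is an idempotent of a Jordan algebra, linearizing the Jordan identity at `x = e + t z`,
`y = e` shows that `L = λ e` satisfies `2L³ - 3L² + L = 0`. Hence `L` is diagonalizable with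
eigenvalues in `{0, 1/2, 1}` (Peirce decomposition), and in an eigenbasis starting with `e` the
products `e₁ eᵢ = ζᵢ eᵢ` are those of `J(ζ)`. Conjugating by `diag(1, s, …, s)` leaves these
products unchanged and multiplies every other structure constant by `s` or `s²`, so `J(ζ)` is the
limit as `s → 0`.
-/

open Filter Topology

section Peirce

variable {K M : Type*} [Field K] [AddCommGroup M] [Module K M]

theorem span_peirce_eigenvectors (h2 : (2 : K) ≠ 0) (f : M →ₗ[K] M)
    (hf : ∀ z, (2 : K) • f (f (f z)) - (3 : K) • f (f z) + f z = 0) :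
    Submodule.span K {v | ∃ c ∈ ({0, 1 / 2, 1} : Set K), f v = c • v} = ⊤ := by
  set S := {v | ∃ c ∈ ({0, 1 / 2, 1} : Set K), f v = c • v}
  refine eq_top_iff.2 fun z _ => ?_
  have h0 : (2 : K) • f (f z) - (3 : K) • f z + z ∈ S :=
    ⟨0, by simp, by simpa using hf z⟩
  have hhalf : (-4 : K) • f (f z) + (4 : K) • f z ∈ S := by
    refine ⟨1 / 2, by simp, ?_⟩
    simp only [map_add, map_smul, smul_add, smul_smul]
    linear_combination (norm := skip) (-2 : K) • hf z
    match_scalars <;> field_simp <;> ring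
  have h1 : (2 : K) • f (f z) - f z ∈ S := by
    refine ⟨1, by simp, ?_⟩
    simp only [map_sub, map_smul]
    linear_combination (norm := module) hf z
  have hz : z = ((2 : K) • f (f z) - (3 : K) • f z + z)
      + ((-4 : K) • f (f z) + (4 : K) • f z) + ((2 : K) • f (f z) - f z) := by
    module
  rw [hz]
  exact add_mem (add_mem (Submodule.subset_span h0) (Submodule.subset_span hhalf))
    (Submodule.subset_span h1)

end Peirce

theorem JordanMul.peirce_cubic {n : ℕ} {lam : Bil n} (hJ : JordanMul lam) {e : V n}
    (hee : lam e e = e) (z : V n) :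
    (2 : ℂ) • lam e (lam e (lam e z)) - (3 : ℂ) • lam e (lam e z) + lam e z = 0 := by
  obtain ⟨hcomm, hjordan⟩ := hJ
  have h1 := hjordan (e + z) e
  have h2 := hjordan (e - z) e
  have h3 := hjordan (e + (2 : ℂ) • z) e
  simp only [map_add, map_sub, map_smul, LinearMap.add_apply, LinearMap.sub_apply,
    LinearMap.smul_apply, hee, hcomm _ e] at h1 h2 h3
  -- the coefficient of `t` in the Jordan identity at `x = e + t z`, `y = e`, from `t = 1, -1, 2`
  linear_combination (norm := module)
    (-1 : ℂ) • h1 + (1 / 3 : ℂ) • h2 + (1 / 6 : ℂ) • h3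

theorem Module.Basis.exists_fin_zero_eq_of_span_eq_top {K M : Type*} [DivisionRing K]
    [AddCommGroup M] [Module K M] {n : ℕ} [NeZero n] (hn : Module.finrank K M = n) {S : Set M}
    (hS : Submodule.span K S = ⊤) {e : M} (heS : e ∈ S) (he : e ≠ 0) :
    ∃ b : Module.Basis (Fin n) K M, b 0 = e ∧ ∀ k, b k ∈ S := by
  have hli : LinearIndepOn K id ({e} : Set M) := (linearIndepOn_singleton_iff K).mpr he
  have hes : ({e} : Set M) ⊆ S := Set.singleton_subset_iff.2 heS
  let b := Module.Basis.extendLe hli hes hS.ge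
  have : Module.Finite K M := Module.finite_of_finrank_pos (hn ▸ Nat.pos_of_neZero n)
  let : Fintype (hli.extend hes) := FiniteDimensional.fintypeBasisIndex b
  let τ : hli.extend hes ≃ Fin n :=
    Fintype.equivFinOfCardEq (by rw [← hn, Module.finrank_eq_card_basis b])
  let e' : hli.extend hes := ⟨e, hli.subset_extend hes rfl⟩
  refine ⟨b.reindex (τ.trans (Equiv.swap 0 (τ e'))), ?_, fun k => ?_⟩
  · simp [b, e']
  · simpa [b] using hli.extend_subset hes (Subtype.prop _)

theorem Module.Basis.equivFun_map_symm_of_apply_eq_smul {ι K M : Type*} [Fintype ι]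
    [CommRing K] [AddCommGroup M] [Module K M] (b : Module.Basis ι K M) {f : M →ₗ[K] M}
    {ζ : ι → K} (hf : ∀ k, f (b k) = ζ k • b k) (u : ι → K) :
    b.equivFun (f (b.equivFun.symm u)) = ζ * u := by
  have : f (b.equivFun.symm u) = b.equivFun.symm (ζ * u) := by
    simp [Module.Basis.equivFun_symm_apply, hf, smul_smul, mul_comm]
  rw [this, LinearEquiv.apply_symm_apply]

instance Units.comap_val_nhds_zero_neBot {K : Type*} [NontriviallyNormedField K] :
    (comap ((↑) : Kˣ → K) (𝓝 0)).NeBot := by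
  rw [comap_neBot_iff_frequently]
  have : ∃ᶠ z in 𝓝[≠] (0 : K), True := frequently_true_iff_neBot _ |>.2 inferInstance
  refine (frequently_nhdsWithin_iff.1 this).mono ?_
  rintro z ⟨-, hz⟩
  exact ⟨Units.mk0 z hz, rfl⟩

section Orbit

variable {n : ℕ}

@[simp]
theorem act_apply (g : V n ≃ₗ[ℂ] V n) (μ : Bil n) (x y : V n) :
    act g μ x y = g (μ (g.symm x) (g.symm y)) := rfl

theorem orb_act_subset (g : V n ≃ₗ[ℂ] V n) (μ : Bil n) : orb (act g μ) ⊆ orb μ := by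
  rintro _ ⟨h, rfl⟩
  exact ⟨g.trans h, rfl⟩

theorem tendsto_bil_iff {α : Type*} {l : Filter α} {F : α → Bil n} {μ : Bil n} :
    Tendsto F l (𝓝 μ) ↔ ∀ x y m, Tendsto (fun a => F a x y m) l (𝓝 (μ x y m)) := by
  rw [(⟨rfl⟩ : Topology.IsInducing fun μ : Bil n => fun x y : V n => μ x y).tendsto_nhds_iff]
  simp only [tendsto_pi_nhds, Function.comp_apply]

end Orbit

theorem E_eq_single {n : ℕ} (k : Fin n) : E n k = Pi.single k 1 := by
  funext m; simp [E, Pi.single_apply, Fin.val_inj]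

section NormalForm

variable {n : ℕ} [NeZero n]

theorem Jzeta_apply (ζ : Fin n → ℂ) (x y : V n) (m : Fin n) :
    Jzeta n ζ x y m = if m = 0 then x 0 * y 0 else ζ m * (x 0 * y m + x m * y 0) := by
  have hE0 : E n 0 = Pi.single 0 1 := by simpa using E_eq_single (0 : Fin n)
  have hc : ∀ i j : Fin n, (if i.val = 0 ∧ j.val = 0 then E n 0
      else if i.val = 0 ∧ 1 ≤ j.val then ζ j • E n j.val
      else if j.val = 0 ∧ 1 ≤ i.val then ζ i • E n i.val else 0) m =
      if m = 0 then (if i = 0 ∧ j = 0 then 1 else 0)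
      else (if i = 0 ∧ j = m then ζ j else 0) + (if i = m ∧ j = 0 then ζ i else 0) := by
    intro i j
    simp only [Fin.val_eq_zero_iff, Nat.one_le_iff_ne_zero, ne_eq, E_eq_single, hE0]
    by_cases hi : i = 0 <;> by_cases hj : j = 0 <;> by_cases hm : m = 0 <;>
      simp [hi, hj, hm, Pi.single_apply, eq_comm]
  simp only [Jzeta, ofTable, LinearMap.mk₂_apply, Finset.sum_apply, Pi.smul_apply, smul_eq_mul,
    hc]
  split_ifs with hm
  · simp [mul_ite, ite_and]
  · simp [mul_add, mul_ite, ite_and, Finset.sum_add_distrib]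
    ring

def scaleTail (s : ℂˣ) : V n ≃ₗ[ℂ] V n :=
  LinearEquiv.piCongrRight fun m => LinearEquiv.smulOfUnit (if m = 0 then 1 else s)

theorem scaleTail_apply (s : ℂˣ) (x : V n) (m : Fin n) :
    scaleTail s x m = (if m = 0 then 1 else (s : ℂ)) * x m := by
  by_cases hm : m = 0 <;> simp [scaleTail, hm, LinearEquiv.smulOfUnit, Units.smul_def]

theorem scaleTail_symm_apply (s : ℂˣ) (x : V n) (m : Fin n) :
    (scaleTail s).symm x m = (if m = 0 then 1 else (s⁻¹ : ℂ)) * x m := by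
  by_cases hm : m = 0 <;> simp [scaleTail, hm, LinearEquiv.smulOfUnit, Units.smul_def]

theorem act_scaleTail_symm_apply {ν : Bil n} {ζ : Fin n → ℂ}
    (hcomm : ∀ x y, ν x y = ν y x) (hζ0 : ζ 0 = 1)
    (hdiag : ∀ u, ν (Pi.single 0 1) u = ζ * u) (s : ℂˣ) (x y : V n) (m : Fin n) :
    act (scaleTail s).symm ν x y m = Jzeta n ζ x y m
      + (if m = 0 then (s : ℂ) ^ 2 else s)
        * ν (Function.update x 0 0) (Function.update y 0 0) m := by
  have hsplit : ∀ z : V n,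
      scaleTail s z = z 0 • Pi.single 0 1 + (s : ℂ) • Function.update z 0 0 := by
    intro z; funext k; by_cases hk : k = 0 <;> simp [scaleTail_apply, hk]
  rw [act_apply, LinearEquiv.symm_symm, hsplit x, hsplit y]
  simp only [map_add, map_smul, LinearMap.add_apply, LinearMap.smul_apply,
    hcomm (Function.update x 0 0) (Pi.single 0 1), hdiag, Pi.add_apply, Pi.smul_apply,
    smul_eq_mul, scaleTail_symm_apply, Pi.mul_apply, Jzeta_apply]
  by_cases hm : m = 0
  · subst hm; simp [hζ0]; ring
  · simp [hm]; field_simp; ring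

theorem Jzeta_mem_closure_orb {ν : Bil n} {ζ : Fin n → ℂ} (hcomm : ∀ x y, ν x y = ν y x)
    (hζ0 : ζ 0 = 1) (hdiag : ∀ u, ν (Pi.single 0 1) u = ζ * u) :
    Jzeta n ζ ∈ closure (orb ν) := by
  refine mem_closure_of_tendsto (f := fun s : ℂˣ => act (scaleTail s).symm ν)
    (b := comap ((↑) : ℂˣ → ℂ) (𝓝 0)) ?_ (Eventually.of_forall fun s => ⟨_, rfl⟩)
  refine tendsto_bil_iff.2 fun x y m => ?_
  simp only [act_scaleTail_symm_apply hcomm hζ0 hdiag]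
  have hcont : Continuous fun z : ℂ => Jzeta n ζ x y m
      + (if m = 0 then z ^ 2 else z) * ν (Function.update x 0 0) (Function.update y 0 0) m := by
    split_ifs <;> fun_prop
  simpa [Function.comp_def] using (hcont.tendsto 0).comp tendsto_comap

end NormalForm

theorem jordan_idempotent_degenerates_general (n : ℕ) (lam : Bil n)
    (hJ : JordanMul lam) (e : V n) (he : e ≠ 0) (hee : lam e e = e) :
    ∃ ζ : Fin n → ℂ,
      (∀ j : Fin n, 1 ≤ j.val → (ζ j = 0 ∨ ζ j = 1 / 2 ∨ ζ j = 1)) ∧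
      Jzeta n ζ ∈ closure (orb lam) := by
  have : NeZero n := ⟨by rintro rfl; exact he (Subsingleton.elim _ _)⟩
  obtain ⟨b, hb0, hbS⟩ := Module.Basis.exists_fin_zero_eq_of_span_eq_top
    (Module.finrank_fin_fun ℂ)
    (span_peirce_eigenvectors two_ne_zero (lam e) (hJ.peirce_cubic hee))
    ⟨1, by simp, by simpa using hee⟩ he
  choose ζ hζ hbζ using hbS
  have hζ0 : ζ 0 = 1 := smul_left_injective ℂ he (by simpa [hb0, hee] using (hbζ 0).symm)
  refine ⟨ζ, fun j _ => by simpa using hζ j,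
    closure_mono (orb_act_subset b.equivFun lam) (Jzeta_mem_closure_orb (fun x y => ?_) hζ0 ?_)⟩
  · rw [act_apply, act_apply, hJ.1]
  · intro u
    simpa [hb0] using b.equivFun_map_symm_of_apply_eq_smul (hb0 ▸ hbζ) u

/-- a Jordan multiplication with a nonzero idempotent degenerates to
some `J(ζ)` with all `ζᵢ ∈ {0, 1/2, 1}`. -/
theorem jordan_idempotent_degenerates (n : ℕ) (hn : 3 ≤ n) (lam : Bil n)
    (hJ : JordanMul lam) (e : V n) (he : e ≠ 0) (hee : lam e e = e) :
    ∃ ζ : Fin n → ℂ,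
      (∀ j : Fin n, 1 ≤ j.val → (ζ j = 0 ∨ ζ j = 1 / 2 ∨ ζ j = 1)) ∧
      Jzeta n ζ ∈ closure (orb lam) :=
  jordan_idempotent_degenerates_general n lam hJ e he hee
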